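/- Let (X,d) be a length pseudometric space, p a boundary point, and z,w ∈ X. Suppose V ⊂⊂ U are neighbourhoods of p with c' := d(X ∩ V, X \ U) > 0. Suppose further that the length structure satisfies the Royden-type bound: for every absolutely continuous curve γ contained in X ∩ U, L(γ) ≥ tanh(c')·L_{X∩U}(γ), where L_{X∩U} is the induced length in the subspace X ∩ U. Then for all z, w ∈ X ∩ V lying in the same component of X ∩ U, d(z,w) ≥ tanh(c')·min(d_{X∩U}(z,w), d_{X∩U}(z, ∂V ∩ X)). -/

import Mathlib

open Set Filter Topology

/-!
Take a curve `γ` from `z` to `w` whose length is within `ε` of `d z w`. If `γ` stays in `U`,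
the Royden-type bound gives `tanh c' · dU z w ≤ L γ`. Otherwise `γ` leaves `V`, and up to its
first hit `γ t₀` of `∂V` it stays in `closure V ⊆ U`, so the same bound applied to that initial
arc gives `tanh c' · dU z (γ t₀) ≤ L γ`. Letting `ε → 0` proves the inequality.
-/

lemma Real.tanh_nonneg {x : ℝ} (hx : 0 ≤ x) : 0 ≤ Real.tanh x := by
  rw [Real.tanh_eq_sinh_div_cosh]
  exact div_nonneg (Real.sinh_nonneg_iff.2 hx) (Real.cosh_pos x).le

/-- `sInf s = 0` when `s` is unbounded below, hence the nonnegativity assumption on `y`. -/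
lemma Real.sInf_le_of_mem_of_le_of_nonneg {s : Set ℝ} {x y : ℝ} (hx : x ∈ s) (hxy : x ≤ y)
    (hy : 0 ≤ y) : sInf s ≤ y := by
  by_cases hs : BddBelow s
  · exact csInf_le_of_le hs hx hxy
  · rw [Real.sInf_of_not_bddBelow hs]
    exact hy

lemma IsPreconnected.inter_frontier_nonempty {T : Type*} [TopologicalSpace T] {s V : Set T}
    (hs : IsPreconnected s) (hin : (s ∩ V).Nonempty) (hout : (s \ V).Nonempty) :
    (s ∩ frontier V).Nonempty := by
  by_contra hempty
  have hoff : ∀ x ∈ s, x ∉ frontier V := fun x hx hxV => hempty ⟨x, hx, hxV⟩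
  have hcover : s ⊆ interior V ∪ (closure V)ᶜ := by
    intro x hx
    by_cases hxV : x ∈ closure V
    · exact Or.inl (by by_contra h; exact hoff x hx ⟨hxV, h⟩)
    · exact Or.inr hxV
  have hinterior : (s ∩ interior V).Nonempty := by
    obtain ⟨x, hx, hxV⟩ := hin
    refine ⟨x, hx, ?_⟩
    by_contra h
    exact hoff x hx ⟨subset_closure hxV, h⟩
  have hsub : s ⊆ interior V :=
    hs.subset_left_of_subset_union isOpen_interior isClosed_closure.isOpen_compl
      (disjoint_compl_right.mono_right (compl_subset_compl.2 interior_subset_closure))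
      hcover hinterior
  obtain ⟨x, hx, hxV⟩ := hout
  exact hxV (interior_subset (hsub hx))

lemma exists_first_mem_frontier {T : Type*} [TopologicalSpace T] {f : ℝ → T} {a b : ℝ}
    {V : Set T} (hf : ContinuousOn f (Icc a b)) (ha : f a ∈ V) (hexit : ∃ t ∈ Icc a b, f t ∉ V) :
    ∃ t₀ ∈ Icc a b, f t₀ ∈ frontier V ∧ ∀ t ∈ Icc a t₀, f t ∈ closure V := by
  have hit : ∀ t ∈ Icc a b, f t ∉ V → ∃ s ∈ Icc a t, f s ∈ frontier V := by
    intro t ht htV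
    obtain ⟨_, ⟨s, hs, rfl⟩, hsV⟩ :=
      (isPreconnected_Icc.image f (hf.mono (Icc_subset_Icc_right ht.2))).inter_frontier_nonempty
        ⟨f a, mem_image_of_mem f (left_mem_Icc.2 ht.1), ha⟩
        ⟨f t, mem_image_of_mem f (right_mem_Icc.2 ht.1), htV⟩
    exact ⟨s, hs, hsV⟩
  have hK : IsCompact (Icc a b ∩ f ⁻¹' frontier V) :=
    isCompact_Icc.of_isClosed_subset
      (hf.preimage_isClosed_of_isClosed isClosed_Icc isClosed_frontier) inter_subset_left
  obtain ⟨t₁, ht₁, ht₁V⟩ := hexit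
  obtain ⟨s₁, hs₁, hs₁V⟩ := hit t₁ ht₁ ht₁V
  obtain ⟨t₀, ⟨ht₀, ht₀V⟩, ht₀least⟩ :=
    hK.exists_isLeast ⟨s₁, Icc_subset_Icc_right ht₁.2 hs₁, hs₁V⟩
  refine ⟨t₀, ht₀, ht₀V, fun t ht => ?_⟩
  by_contra htV
  obtain ⟨s, hs, hsV⟩ := hit t ⟨ht.1, ht.2.trans ht₀.2⟩ fun h => htV (subset_closure h)
  have ht₀s : t₀ ≤ s := ht₀least ⟨⟨hs.1, hs.2.trans (ht.2.trans ht₀.2)⟩, hsV⟩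
  have htt₀ : t = t₀ := le_antisymm ht.2 (ht₀s.trans hs.2)
  exact htV (htt₀ ▸ frontier_subset_closure ht₀V)

theorem stmt_16 {X T : Type*} [TopologicalSpace X] [TopologicalSpace T]
    (ι : X → T) (hι : Continuous ι)
    (U V : Set T) (hVU : closure V ⊆ U)
    (d dU : X → X → ℝ) (L LU : (ℝ → X) → ℝ → ℝ → ℝ)
    -- `d` is the infimum of lengths: lower bound and existence of almost-geodesics
    (hgeo : ∀ (z w : X), ∀ ε > (0 : ℝ), ∃ (γ : ℝ → X) (a b : ℝ), a ≤ b ∧ γ a = z ∧ γ b = w ∧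
      ContinuousOn γ (Icc a b) ∧ L γ a b ≤ d z w + ε)
    -- lengths are nonnegative and monotone under restriction
    (hLU0 : ∀ γ a b, 0 ≤ LU γ a b)
    (hLmono : ∀ (γ : ℝ → X) (a b a' b' : ℝ), a ≤ a' → a' ≤ b' → b' ≤ b →
      L γ a' b' ≤ L γ a b)
    -- `dU` is bounded by the induced length of curves staying in `X ∩ U`
    (hdU : ∀ (γ : ℝ → X) (a b : ℝ), a ≤ b → ContinuousOn γ (Icc a b) →
      (∀ t ∈ Icc a b, ι (γ t) ∈ U) → dU (γ a) (γ b) ≤ LU γ a b)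
    -- the separation constant
    (c' : ℝ) (hc' : 0 < c')
    -- Royden-type bound for curves contained in `X ∩ U`
    (hroyden : ∀ (γ : ℝ → X) (a b : ℝ), (∀ t ∈ Icc a b, ι (γ t) ∈ U) →
      Real.tanh c' * LU γ a b ≤ L γ a b)
    (z w : X) (hz : ι z ∈ V) :
    Real.tanh c' * min (dU z w) (sInf {r : ℝ | ∃ x : X, ι x ∈ frontier V ∧ r = dU z x})
      ≤ d z w := by
  have htanh : 0 ≤ Real.tanh c' := Real.tanh_nonneg hc'.le
  refine le_of_forall_pos_le_add fun ε hε => ?_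
  obtain ⟨γ, a, b, hab, rfl, rfl, hγ, hLγ⟩ := hgeo z w ε hε
  have hinitial : ∀ t ∈ Icc a b, (∀ s ∈ Icc a t, ι (γ s) ∈ U) →
      Real.tanh c' * LU γ a t ≤ d (γ a) (γ b) + ε := fun t ht htU =>
    calc Real.tanh c' * LU γ a t ≤ L γ a t := hroyden γ a t htU
      _ ≤ L γ a b := hLmono γ a b a t le_rfl ht.1 ht.2
      _ ≤ d (γ a) (γ b) + ε := hLγ
  by_cases hstay : ∀ t ∈ Icc a b, ι (γ t) ∈ U
  · calc _ ≤ Real.tanh c' * LU γ a b :=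
          mul_le_mul_of_nonneg_left ((min_le_left _ _).trans (hdU γ a b hab hγ hstay)) htanh
      _ ≤ _ := hinitial b (right_mem_Icc.2 hab) hstay
  · obtain ⟨t₁, ht₁, ht₁U⟩ := not_forall₂.1 hstay
    obtain ⟨t₀, ht₀, hfront, hclosure⟩ := exists_first_mem_frontier (hι.comp_continuousOn hγ) hz
      ⟨t₁, ht₁, fun h => ht₁U (hVU (subset_closure h))⟩
    have hU₀ : ∀ t ∈ Icc a t₀, ι (γ t) ∈ U := fun t ht => hVU (hclosure t ht)
    have hdU₀ : dU (γ a) (γ t₀) ≤ LU γ a t₀ :=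
      hdU γ a t₀ ht₀.1 (hγ.mono (Icc_subset_Icc_right ht₀.2)) hU₀
    have hsInf : sInf {r : ℝ | ∃ x : X, ι x ∈ frontier V ∧ r = dU (γ a) x} ≤ LU γ a t₀ :=
      Real.sInf_le_of_mem_of_le_of_nonneg ⟨γ t₀, hfront, rfl⟩ hdU₀ (hLU0 γ a t₀)
    calc _ ≤ Real.tanh c' * LU γ a t₀ :=
          mul_le_mul_of_nonneg_left ((min_le_right _ _).trans hsInf) htanh
      _ ≤ _ := hinitial t₀ ht₀ hU₀
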